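/- arXiv:2107.08071 — 3 statements merged into one kernel-verified Lean document; each statement's English description precedes it below -/
import Mathlib

section
/- Type I and Type II moves on permutations preserve cycles in permutation graphs: if σ ≤_i τ and the permutation graph G_σ contains a cycle (i.e., G_σ is not acyclic), then the permutation graph G_τ also contains a cycle. -/
/-- The permutation graph of `σ`: vertices `i < j` are adjacent iff `σ i > σ j`. -/
def permGraph {n : ℕ} (σ : Equiv.Perm (Fin n)) : SimpleGraph (Fin n) :=
  SimpleGraph.fromRel (fun i j => i < j ∧ σ j < σ i)

/-- `τ` is obtained from `σ` by a Type II move at positions `p < q`: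
`σ p < σ q`, every value strictly between `σ p` and `σ q` occurs at a position
smaller than `q`, and `τ` is `σ` with the values at positions `p` and `q` swapped. -/
def PermTypeIIAt {n : ℕ} (σ τ : Equiv.Perm (Fin n)) (p q : Fin n) : Prop :=
  p < q ∧ σ p < σ q ∧ (∀ v : Fin n, σ p < v → v < σ q → σ.symm v < q) ∧
    τ = σ * Equiv.swap p q

/-- `τ` is obtained from `σ` by a Type II move. -/
def PermTypeII {n : ℕ} (σ τ : Equiv.Perm (Fin n)) : Prop :=
  ∃ p q : Fin n, PermTypeIIAt σ τ p q

/-- `σ` is Type-I-below `τ`: there is a strictly increasing choice of positions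
`f` with `τ (f j) ≥ σ j` for all `j`, and `σ` order isomorphic to the subword of
`τ` on those positions. -/
def TypeIBelow {n m : ℕ} (σ : Equiv.Perm (Fin n)) (τ : Equiv.Perm (Fin m)) : Prop :=
  ∃ f : Fin n → Fin m, StrictMono f ∧ (∀ j, (σ j : ℕ) ≤ (τ (f j) : ℕ)) ∧
    ∀ j k, σ j < σ k ↔ τ (f j) < τ (f k)

/-- One step of the order `≤ᵢ` on permutations of arbitrary sizes: either a
Type-I-below relation or (for equal sizes) a Type II move. -/
def PermStep : (Σ n : ℕ, Equiv.Perm (Fin n)) → (Σ n : ℕ, Equiv.Perm (Fin n)) → Prop :=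
  fun x y => TypeIBelow x.2 y.2 ∨
    ∃ h : x.1 = y.1, PermTypeII (Equiv.permCongr (finCongr h) x.2) y.2

/-- The order `≤ᵢ` on permutations of arbitrary sizes: the reflexive–transitive
closure of the union of the Type-I-below relation and the Type II move relation. -/
def PermLeI : (Σ n : ℕ, Equiv.Perm (Fin n)) → (Σ n : ℕ, Equiv.Perm (Fin n)) → Prop :=
  Relation.ReflTransGen PermStep

/-!
A graph is acyclic iff each of its edges is a bridge, so it suffices to carry a non-bridge edge
of `G_σ` to one of `G_τ`. A Type I move embeds `G_σ` in `G_τ`. A Type II move at `p < q` adds the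
edge `p q` and keeps every edge of `G_σ` except the edges `x p` with `x < p` and
`σ p < σ x < σ q`; each of these is replaced by the edge `x q`, absent from `G_σ`. So the edges
`x p` slide along the new edge `p q`, and a path of `G_σ` avoiding a non-bridge edge `e`
reroutes through `q` into a path of `G_τ` avoiding `e`, or avoiding `a q` when `e = a p` is
one of the slid edges.
-/

namespace SimpleGraph

variable {V : Type*} {G H : SimpleGraph V}

lemma reachable_le_of_adj_le (h : G.Adj ≤ H.Reachable) : G.Reachable ≤ H.Reachable :=
  G.reachable_eq_reflTransGen ▸
    Relation.reflTransGen_le_of_equivalence_of_le H.reachable_is_equivalence h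

lemma not_isAcyclic_iff_exists_adj_reachable_deleteEdges :
    ¬ G.IsAcyclic ↔ ∃ u v, G.Adj u v ∧ (G.deleteEdges {s(u, v)}).Reachable u v := by
  simp [isAcyclic_iff_forall_adj_isBridge, isBridge_iff]

lemma Reachable.of_sym2_eq {u v x y : V} (h : s(x, y) = s(u, v)) (huv : G.Reachable u v) :
    G.Reachable x y := by
  rcases Sym2.eq_iff.1 h with ⟨rfl, rfl⟩ | ⟨rfl, rfl⟩
  exacts [huv, huv.symm]

variable {p q : V} {X : Set V}

lemma reachable_deleteEdges_le_of_slide (hpq : H.Adj p q) (hX : ∀ x ∈ X, H.Adj x q)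
    (hkeep : ∀ x y, G.Adj x y → (∀ z ∈ X, s(x, y) ≠ s(z, p)) → H.Adj x y)
    {e e' : Sym2 V} (hG : e' ∈ G.edgeSet → e' = e) (hp : s(p, q) ≠ e')
    (hq : ∀ z ∈ X, s(z, p) ≠ e → s(z, q) ≠ e') :
    (G.deleteEdges {e}).Reachable ≤ (H.deleteEdges {e'}).Reachable := by
  refine reachable_le_of_adj_le fun x y hxy => ?_
  obtain ⟨hxy, hne⟩ := (deleteEdges_adj ..).1 hxy
  rw [Set.mem_singleton_iff] at hne
  by_cases hslid : ∃ z ∈ X, s(x, y) = s(z, p)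
  · obtain ⟨z, hz, hzp⟩ := hslid
    have hzq : (H.deleteEdges {e'}).Adj z q :=
      (deleteEdges_adj ..).2 ⟨hX z hz, hq z hz (hzp ▸ hne)⟩
    have hqp : (H.deleteEdges {e'}).Adj q p :=
      (deleteEdges_adj ..).2 ⟨hpq.symm, Sym2.eq_swap ▸ hp⟩
    exact Reachable.of_sym2_eq hzp (hzq.reachable.trans hqp.reachable)
  · push Not at hslid
    refine ((deleteEdges_adj ..).2 ⟨hkeep x y hxy hslid, fun he => hne ?_⟩).reachable
    exact he ▸ hG (he ▸ hxy)

theorem not_isAcyclic_of_slide (hpq : H.Adj p q) (hpqG : ¬ G.Adj p q)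
    (hX : ∀ x ∈ X, H.Adj x q ∧ ¬ G.Adj x q)
    (hkeep : ∀ x y, G.Adj x y → (∀ z ∈ X, s(x, y) ≠ s(z, p)) → H.Adj x y)
    (hG : ¬ G.IsAcyclic) : ¬ H.IsAcyclic := by
  rw [not_isAcyclic_iff_exists_adj_reachable_deleteEdges] at hG ⊢
  obtain ⟨a, b, hab, hreach⟩ := hG
  have hXH : ∀ x ∈ X, H.Adj x q := fun x hx => (hX x hx).1
  by_cases hslid : ∃ z ∈ X, s(a, b) = s(z, p)
  · obtain ⟨z, hz, hzp⟩ := hslid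
    have hzp' : G.Adj z p := by rwa [← mem_edgeSet, ← hzp]
    have hpz : s(p, q) ≠ s(z, q) := fun h => hzp'.ne (Sym2.congr_left.1 h).symm
    refine ⟨z, q, hXH z hz, ?_⟩
    have hle := reachable_deleteEdges_le_of_slide hpq hXH hkeep (e := s(z, p)) (e' := s(z, q))
      (fun h => absurd h (hX z hz).2) hpz
      (fun x _ hxz h => hxz (by rw [Sym2.congr_left.1 h]))
    refine (hle _ _ (Reachable.of_sym2_eq hzp.symm (hzp ▸ hreach))).trans ?_
    exact ((deleteEdges_adj ..).2 ⟨hpq, hpz⟩).reachable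
  · push Not at hslid
    refine ⟨a, b, hkeep a b hab hslid, ?_⟩
    refine reachable_deleteEdges_le_of_slide hpq hXH hkeep (fun _ => rfl) ?_ ?_ _ _ hreach
    · exact fun h => hpqG (by rwa [← mem_edgeSet, h])
    · exact fun x hx _ h => (hX x hx).2 (by rwa [← mem_edgeSet, h])

end SimpleGraph

open SimpleGraph

variable {n m : ℕ} {σ τ : Equiv.Perm (Fin n)} {p q : Fin n}

lemma permGraph_adj_iff {i j : Fin n} :
    (permGraph σ).Adj i j ↔ (i < j ∧ σ j < σ i) ∨ (j < i ∧ σ i < σ j) := by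
  simp only [permGraph, fromRel_adj, ne_eq, and_iff_right_iff_imp]
  rintro (⟨h, -⟩ | ⟨h, -⟩)
  exacts [h.ne, h.ne']

lemma permGraph_adj_iff_of_lt {i j : Fin n} (h : i < j) :
    (permGraph σ).Adj i j ↔ σ j < σ i := by
  simp [permGraph_adj_iff, h, h.not_gt]

lemma TypeIBelow.not_isAcyclic {τ : Equiv.Perm (Fin m)} (h : TypeIBelow σ τ)
    (hc : ¬ (permGraph σ).IsAcyclic) : ¬ (permGraph τ).IsAcyclic := by
  obtain ⟨f, hf, -, hiso⟩ := h
  have hadj {i j} (hij : (permGraph σ).Adj i j) : (permGraph τ).Adj (f i) (f j) := by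
    simpa only [permGraph_adj_iff, hf.lt_iff_lt, hiso] using hij
  exact fun hτ => hc (hτ.comap ⟨f, hadj⟩ hf.injective)

def slidPositions (σ : Equiv.Perm (Fin n)) (p q : Fin n) : Set (Fin n) :=
  {x | x < p ∧ σ p < σ x ∧ σ x < σ q}

namespace PermTypeIIAt

variable (h : PermTypeIIAt σ τ p q)
include h

lemma apply_left : τ p = σ q := by
  simp [h.2.2.2]

lemma apply_right : τ q = σ p := by
  simp [h.2.2.2]

lemma apply_of_ne {x : Fin n} (hp : x ≠ p) (hq : x ≠ q) : τ x = σ x := by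
  simp [h.2.2.2, Equiv.swap_apply_of_ne_of_ne hp hq]

lemma lt_right_of_between {x : Fin n} (h₁ : σ p < σ x) (h₂ : σ x < σ q) : x < q := by
  simpa using h.2.2.1 (σ x) h₁ h₂

lemma adj_left_right : (permGraph τ).Adj p q := by
  rw [permGraph_adj_iff_of_lt h.1, h.apply_left, h.apply_right]
  exact h.2.1

lemma not_adj_left_right : ¬ (permGraph σ).Adj p q := by
  rw [permGraph_adj_iff_of_lt h.1]
  exact h.2.1.not_gt

lemma adj_right_of_mem_slidPositions {x : Fin n} (hx : x ∈ slidPositions σ p q) :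
    (permGraph τ).Adj x q ∧ ¬ (permGraph σ).Adj x q := by
  have hxq := hx.1.trans h.1
  rw [permGraph_adj_iff_of_lt hxq, permGraph_adj_iff_of_lt hxq, h.apply_right,
    h.apply_of_ne hx.1.ne hxq.ne]
  exact ⟨hx.2.1, hx.2.2.not_gt⟩

lemma adj_of_adj {x y : Fin n} (hxy : (permGraph σ).Adj x y)
    (hslid : ∀ z ∈ slidPositions σ p q, s(x, y) ≠ s(z, p)) :
    (permGraph τ).Adj x y := by
  wlog hlt : x < y generalizing x y
  · refine (this hxy.symm (fun z hz he => hslid z hz (Sym2.eq_swap.trans he)) ?_).symm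
    exact (not_lt.1 hlt).lt_of_ne hxy.ne'
  rw [permGraph_adj_iff_of_lt hlt] at hxy ⊢
  have hslid' (hx : x < p ∧ σ p < σ x ∧ σ x < σ q) : y ≠ p := fun hy => hslid x hx (hy ▸ rfl)
  -- Split on whether `x`, `y` are `p` or `q`; only `x = q < y` needs the Type II condition.
  have hτp := h.apply_left
  have hτq := h.apply_right
  have hτ := @h.apply_of_ne
  have hbetween := @h.lt_right_of_between
  grind [h.1, h.2.1, σ.injective]

lemma not_isAcyclic (hc : ¬ (permGraph σ).IsAcyclic) : ¬ (permGraph τ).IsAcyclic :=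
  not_isAcyclic_of_slide h.adj_left_right h.not_adj_left_right
    (fun _ => h.adj_right_of_mem_slidPositions) (fun _ _ => h.adj_of_adj) hc

end PermTypeIIAt

lemma PermStep.not_isAcyclic {x y : Σ n : ℕ, Equiv.Perm (Fin n)} (h : PermStep x y)
    (hc : ¬ (permGraph x.2).IsAcyclic) : ¬ (permGraph y.2).IsAcyclic := by
  obtain ⟨n, σ⟩ := x
  obtain ⟨m, τ⟩ := y
  rcases h with h | ⟨hnm, p, q, h⟩
  · exact h.not_isAcyclic hc
  · obtain rfl : n = m := hnm
    -- `finCongr rfl` is definitionally the identity.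
    exact h.not_isAcyclic hc

/-- Type I and Type II moves preserve cycles in permutation
graphs: if `σ ≤ᵢ τ` and `G_σ` contains a cycle (is not acyclic), then `G_τ`
also contains a cycle. -/
theorem moves_preserve_cycles (x y : Σ n : ℕ, Equiv.Perm (Fin n))
    (h : PermLeI x y) (hc : ¬ (permGraph x.2).IsAcyclic) :
    ¬ (permGraph y.2).IsAcyclic := by
  induction h with
  | refl => exact hc
  | tail _ hstep ih => exact hstep.not_isAcyclic ih
end

section
/- Koh–Ree characterization of permutation graphs: a simple graph G on vertex set {1,…,n} is equal to the permutation graph G_σ of some permutation σ of {1,…,n} if and only if its edge set, with each edge written as an ordered pair (i,j) with i < j, satisfies both: (P1) if (i,j) and (j,k) are edges then (i,k) is an edge; and (P2) if (i,k) is an edge and i < j < k, then (i,j) is an edge or (j,k) is an edge. -/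
theorem exists_equiv_fin_of_isStrictTotalOrder {α : Type*} [Fintype α] {k : ℕ}
    (h : Fintype.card α = k) (r : α → α → Prop) [IsStrictTotalOrder α r] :
    ∃ e : α ≃ Fin k, ∀ a b, r a b ↔ e a < e b := by
  classical
  let := linearOrderOfSTO r
  let e := (Fintype.orderIsoFinOfCardEq α h).symm
  exact ⟨e.toEquiv, fun a b => e.lt_iff_lt.symm⟩

theorem SimpleGraph.ext_of_adj_of_lt {α : Type*} [LinearOrder α] {G H : SimpleGraph α}
    (h : ∀ i j, i < j → (G.Adj i j ↔ H.Adj i j)) : G = H := by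
  ext i j
  rcases lt_trichotomy i j with hij | rfl | hji
  · exact h i j hij
  · simp
  · rw [G.adj_comm, H.adj_comm, h j i hji]

theorem permGraph_adj_of_lt {n : ℕ} (σ : Equiv.Perm (Fin n)) {i j : Fin n} (hij : i < j) :
    (permGraph σ).Adj i j ↔ σ j < σ i := by
  simp [permGraph, hij, hij.ne, hij.not_gt]

theorem permGraph_adj_trans {n : ℕ} (σ : Equiv.Perm (Fin n)) {i j k : Fin n} (hij : i < j)
    (hjk : j < k) (h : (permGraph σ).Adj i j) (h' : (permGraph σ).Adj j k) :
    (permGraph σ).Adj i k := by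
  rw [permGraph_adj_of_lt σ hij] at h
  rw [permGraph_adj_of_lt σ hjk] at h'
  exact (permGraph_adj_of_lt σ (hij.trans hjk)).2 (h'.trans h)

theorem permGraph_adj_or_adj_of_adj {n : ℕ} (σ : Equiv.Perm (Fin n)) {i j k : Fin n} (hij : i < j)
    (hjk : j < k) (h : (permGraph σ).Adj i k) :
    (permGraph σ).Adj i j ∨ (permGraph σ).Adj j k := by
  rw [permGraph_adj_of_lt σ (hij.trans hjk)] at h
  rw [permGraph_adj_of_lt σ hij, permGraph_adj_of_lt σ hjk]
  exact (lt_or_ge (σ j) (σ i)).imp_right h.trans_le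

namespace SimpleGraph

variable {α : Type*} [LinearOrder α] (G : SimpleGraph α)

def kohReeOrder (a b : α) : Prop :=
  (a < b ∧ ¬G.Adj a b) ∨ (b < a ∧ G.Adj a b)

variable {G}

theorem kohReeOrder_of_lt {a b : α} (hab : a < b) : G.kohReeOrder b a ↔ G.Adj a b := by
  simp [kohReeOrder, hab, hab.not_gt, G.adj_comm b a]

theorem isStrictTotalOrder_kohReeOrder
    (h₁ : ∀ i j k, i < j → j < k → G.Adj i j → G.Adj j k → G.Adj i k)
    (h₂ : ∀ i j k, i < j → j < k → G.Adj i k → G.Adj i j ∨ G.Adj j k) :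
    IsStrictTotalOrder α G.kohReeOrder where
  trichotomous a b hab hba := by
    by_contra hne
    rcases Ne.lt_or_gt hne with h | h <;> by_cases hadj : G.Adj a b
    · exact hba (Or.inr ⟨h, hadj.symm⟩)
    · exact hab (Or.inl ⟨h, hadj⟩)
    · exact hab (Or.inr ⟨h, hadj⟩)
    · exact hba (Or.inl ⟨h, fun h' => hadj h'.symm⟩)
  irrefl a := by rintro (⟨h, -⟩ | ⟨h, -⟩) <;> exact h.false
  trans a b c := by
    rintro (⟨hab, hab'⟩ | ⟨hba, hab'⟩) (⟨hbc, hbc'⟩ | ⟨hcb, hbc'⟩)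
    · exact Or.inl ⟨hab.trans hbc, fun h => (h₂ a b c hab hbc h).elim hab' hbc'⟩
    · rcases lt_trichotomy a c with hac | rfl | hca
      · exact Or.inl ⟨hac, fun h => hab' (h₁ a c b hac hcb h hbc'.symm)⟩
      · exact absurd hbc'.symm hab'
      · exact Or.inr ⟨hca, ((h₂ c a b hca hab hbc'.symm).resolve_right hab').symm⟩
    · rcases lt_trichotomy a c with hac | rfl | hca
      · exact Or.inl ⟨hac, fun h => hbc' (h₁ b a c hba hac hab'.symm h)⟩
      · exact absurd hab'.symm hbc'
      · exact Or.inr ⟨hca, ((h₂ b c a hbc hca hab'.symm).resolve_left hbc').symm⟩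
    · exact Or.inr ⟨hcb.trans hba, (h₁ c b a hcb hba hbc'.symm hab'.symm).symm⟩

end SimpleGraph

/-- Koh–Ree. A simple graph `G` on `{1,…,n}` is the
permutation graph of some permutation of `{1,…,n}` if and only if, writing each
edge as an ordered pair `(i,j)` with `i < j`, it satisfies:
(P1) if `(i,j)` and `(j,k)` are edges then `(i,k)` is an edge; and
(P2) if `(i,k)` is an edge and `i < j < k`, then `(i,j)` or `(j,k)` is an edge. -/
theorem kohRee_characterization {n : ℕ} (G : SimpleGraph (Fin n)) :
    (∃ σ : Equiv.Perm (Fin n), G = permGraph σ) ↔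
      ((∀ i j k : Fin n, i < j → j < k → G.Adj i j → G.Adj j k → G.Adj i k) ∧
       (∀ i j k : Fin n, i < j → j < k → G.Adj i k → (G.Adj i j ∨ G.Adj j k))) := by
  constructor
  · rintro ⟨σ, rfl⟩
    exact ⟨fun _ _ _ => permGraph_adj_trans σ, fun _ _ _ => permGraph_adj_or_adj_of_adj σ⟩
  · rintro ⟨h₁, h₂⟩
    have := G.isStrictTotalOrder_kohReeOrder h₁ h₂
    obtain ⟨σ, hσ⟩ := exists_equiv_fin_of_isStrictTotalOrder (Fintype.card_fin n) G.kohReeOrder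
    refine ⟨σ, SimpleGraph.ext_of_adj_of_lt fun i j hij => ?_⟩
    rw [permGraph_adj_of_lt σ hij, ← hσ, SimpleGraph.kohReeOrder_of_lt hij]
end

section
/- For every perfect matching Γ of the vertex set {1,…,2m}, there is a finite sequence of Type II moves transforming Γ into the matching {{1,2}, {3,4}, …, {2m−1,2m}} consisting of the m consecutive edges. -/
/-!
Give a matching the energy `∑ (length of an edge)²`. A Type II move replaces two edges on
four vertices `a < b < c < d` by another pairing of them, so it keeps a perfect matching
perfect, and it lowers the energy: by `2 (b - a) (d - c)` for a II(a) move and by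
`2 (c - b) (d - a)` for a II(b) move. It therefore suffices that every perfect matching other
than the consecutive one admits a move.

Take a long edge `{a, C}` (`a + 2 ≤ C`) with `C` minimal, so every edge ending before `C` is
of the form `{x, x + 1}`. If some edge lies strictly between `a` and `C`, the one with the
smallest left end is some `{u, u + 1}`, every vertex between `a` and `u` is matched beyond `C`,
and II(a) applies to `{a, C}, {u, u + 1}`. Otherwise `a + 1` and every vertex between `a + 1`
and `C` are matched beyond `C`, and II(b) applies to `{a, C}, {a + 1, d}`.
-/

/-- A vertex `v` is *in* the matching `Γ` if it is an endpoint of some edge of `Γ`. -/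
def InMatch (Γ : Finset (Sym2 ℕ)) (v : ℕ) : Prop := ∃ e ∈ Γ, v ∈ e

/-- A matching on ℕ: a finite set of edges (unordered pairs of distinct naturals)
that are pairwise vertex-disjoint. -/
def IsMatching (Γ : Finset (Sym2 ℕ)) : Prop :=
  (∀ e ∈ Γ, ¬ e.IsDiag) ∧
    ∀ e ∈ Γ, ∀ f ∈ Γ, e ≠ f → ∀ v : ℕ, v ∈ e → v ∉ f

/-- Type I(a) move: add a single new edge whose endpoints are not in `Γ`. -/
def TypeIa (Γ Γ' : Finset (Sym2 ℕ)) : Prop :=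
  ∃ i j : ℕ, i ≠ j ∧ ¬ InMatch Γ i ∧ ¬ InMatch Γ j ∧ Γ' = insert s(i, j) Γ

/-- Type I(b) move: replace an edge `{i,j}` by `{i,j+1}` when `j+1` is not in `Γ`. -/
def TypeIb (Γ Γ' : Finset (Sym2 ℕ)) : Prop :=
  ∃ i j : ℕ, s(i, j) ∈ Γ ∧ ¬ InMatch Γ (j + 1) ∧
    Γ' = insert s(i, j + 1) (Γ.erase s(i, j))

/-- Type II(a) move. -/
def TypeIIa (Γ Γ' : Finset (Sym2 ℕ)) : Prop :=
  ∃ a b c d : ℕ, a < b ∧ b < c ∧ c < d ∧ s(a, d) ∈ Γ ∧ s(b, c) ∈ Γ ∧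
    (∀ v w : ℕ, a < v → v < b → s(v, w) ∈ Γ → c < w) ∧
    Γ' = insert s(a, c) (insert s(b, d) ((Γ.erase s(a, d)).erase s(b, c)))

/-- Type II(b) move. -/
def TypeIIb (Γ Γ' : Finset (Sym2 ℕ)) : Prop :=
  ∃ a b c d : ℕ, a < b ∧ b < c ∧ c < d ∧ s(a, c) ∈ Γ ∧ s(b, d) ∈ Γ ∧
    (∀ v w : ℕ, b < v → v < c → s(v, w) ∈ Γ → c < w) ∧
    Γ' = insert s(a, b) (insert s(c, d) ((Γ.erase s(a, c)).erase s(b, d)))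

/-- A single move of any type. -/
def MatchStep (Γ Γ' : Finset (Sym2 ℕ)) : Prop :=
  TypeIa Γ Γ' ∨ TypeIb Γ Γ' ∨ TypeIIa Γ Γ' ∨ TypeIIb Γ Γ'

/-- The partial order `⊑`: `Γ ⊑ Γ'` if `Γ'` is obtained from `Γ` by a finite
sequence of Type I and Type II moves. -/
def MatchLe : Finset (Sym2 ℕ) → Finset (Sym2 ℕ) → Prop :=
  Relation.ReflTransGen MatchStep

/-- `Γ` is a perfect matching of `{1,…,2m}`. -/
def IsPerfectOn (m : ℕ) (Γ : Finset (Sym2 ℕ)) : Prop :=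
  IsMatching Γ ∧ ∀ v : ℕ, InMatch Γ v ↔ 1 ≤ v ∧ v ≤ 2 * m

/-- A single Type II move. -/
def TypeIIStep (Γ Γ' : Finset (Sym2 ℕ)) : Prop := TypeIIa Γ Γ' ∨ TypeIIb Γ Γ'

def edgeLength : Sym2 ℕ → ℕ := Sym2.lift ⟨Nat.dist, Nat.dist_comm⟩

def energy (Γ : Finset (Sym2 ℕ)) : ℕ := ∑ e ∈ Γ, edgeLength e ^ 2

def consecutiveMatching (m : ℕ) : Finset (Sym2 ℕ) :=
  (Finset.range m).image fun i => s(2 * i + 1, 2 * i + 2)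

def rewire (Γ : Finset (Sym2 ℕ)) (w x y z : ℕ) : Finset (Sym2 ℕ) :=
  insert s(w, y) (insert s(x, z) ((Γ.erase s(w, x)).erase s(y, z)))

namespace IsMatching

variable {Γ : Finset (Sym2 ℕ)}

theorem eq_of_mem_of_mem (hΓ : IsMatching Γ) {e f : Sym2 ℕ} (he : e ∈ Γ) (hf : f ∈ Γ) {v : ℕ}
    (hve : v ∈ e) (hvf : v ∈ f) : e = f := by
  by_contra hne
  exact hΓ.2 e he f hf hne v hve hvf

theorem ne_of_mem (hΓ : IsMatching Γ) {v w : ℕ} (h : s(v, w) ∈ Γ) : v ≠ w := by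
  rintro rfl
  exact hΓ.1 _ h (Sym2.mk_isDiag_iff.mpr rfl)

theorem partner_unique (hΓ : IsMatching Γ) {u v v' : ℕ} (h : s(u, v) ∈ Γ) (h' : s(u, v') ∈ Γ) :
    v = v' := by
  have := hΓ.eq_of_mem_of_mem h h' (Sym2.mem_mk_left u v) (Sym2.mem_mk_left u v')
  rcases Sym2.eq_iff.mp this with ⟨-, rfl⟩ | ⟨rfl, rfl⟩ <;> rfl

end IsMatching

section Rewire

variable {Γ : Finset (Sym2 ℕ)} {w x y z : ℕ}

theorem mem_rewire {e : Sym2 ℕ} : e ∈ rewire Γ w x y z ↔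
    e = s(w, y) ∨ e = s(x, z) ∨ (e ∈ Γ ∧ e ≠ s(w, x) ∧ e ≠ s(y, z)) := by
  simp only [rewire, Finset.mem_insert, Finset.mem_erase]
  tauto

theorem IsMatching.rewire (hΓ : IsMatching Γ) (hwx : s(w, x) ∈ Γ) (hyz : s(y, z) ∈ Γ)
    (hwy : w ≠ y) (hwz : w ≠ z) (hxy : x ≠ y) (hxz : x ≠ z) :
    IsMatching (rewire Γ w x y z) := by
  have hwx' := hΓ.ne_of_mem hwx
  have hyz' := hΓ.ne_of_mem hyz
  have hold : ∀ f ∈ Γ, f ≠ s(w, x) → f ≠ s(y, z) → ∀ v ∈ f, v ≠ w ∧ v ≠ x ∧ v ≠ y ∧ v ≠ z := by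
    intro f hf h1 h2 v hv
    refine ⟨?_, ?_, ?_, ?_⟩ <;> rintro rfl
    exacts [h1 (hΓ.eq_of_mem_of_mem hf hwx hv (Sym2.mem_mk_left _ _)),
      h1 (hΓ.eq_of_mem_of_mem hf hwx hv (Sym2.mem_mk_right _ _)),
      h2 (hΓ.eq_of_mem_of_mem hf hyz hv (Sym2.mem_mk_left _ _)),
      h2 (hΓ.eq_of_mem_of_mem hf hyz hv (Sym2.mem_mk_right _ _))]
  refine ⟨fun e he => ?_, fun e he f hf hef v hve hvf => ?_⟩
  · rcases mem_rewire.mp he with rfl | rfl | ⟨he, -⟩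
    exacts [Sym2.mk_isDiag_iff.not.mpr hwy, Sym2.mk_isDiag_iff.not.mpr hxz, hΓ.1 e he]
  · rcases mem_rewire.mp he with rfl | rfl | ⟨he, he1, he2⟩ <;>
      rcases mem_rewire.mp hf with rfl | rfl | ⟨hf, hf1, hf2⟩ <;>
      (try simp only [Sym2.mem_iff] at hve hvf)
    all_goals first
      | exact hef rfl
      | exact hΓ.2 e he f hf hef v hve hvf
      | have := hold _ hf hf1 hf2 v hvf; omega
      | have := hold _ he he1 he2 v hve; omega
      | omega

theorem inMatch_rewire_iff (hwx : s(w, x) ∈ Γ) (hyz : s(y, z) ∈ Γ) (v : ℕ) :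
    InMatch (rewire Γ w x y z) v ↔ InMatch Γ v := by
  have hw : InMatch Γ w := ⟨_, hwx, Sym2.mem_mk_left _ _⟩
  have hx : InMatch Γ x := ⟨_, hwx, Sym2.mem_mk_right _ _⟩
  have hy : InMatch Γ y := ⟨_, hyz, Sym2.mem_mk_left _ _⟩
  have hz : InMatch Γ z := ⟨_, hyz, Sym2.mem_mk_right _ _⟩
  have hw' : InMatch (rewire Γ w x y z) w := ⟨_, mem_rewire.mpr (.inl rfl), Sym2.mem_mk_left _ _⟩
  have hx' : InMatch (rewire Γ w x y z) x :=
    ⟨_, mem_rewire.mpr (.inr (.inl rfl)), Sym2.mem_mk_left _ _⟩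
  have hy' : InMatch (rewire Γ w x y z) y := ⟨_, mem_rewire.mpr (.inl rfl), Sym2.mem_mk_right _ _⟩
  have hz' : InMatch (rewire Γ w x y z) z :=
    ⟨_, mem_rewire.mpr (.inr (.inl rfl)), Sym2.mem_mk_right _ _⟩
  constructor
  · rintro ⟨e, he, hv⟩
    rcases mem_rewire.mp he with rfl | rfl | ⟨he, -⟩
    · rcases Sym2.mem_iff.mp hv with rfl | rfl <;> assumption
    · rcases Sym2.mem_iff.mp hv with rfl | rfl <;> assumption
    · exact ⟨e, he, hv⟩
  · rintro ⟨e, he, hv⟩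
    by_cases h1 : e = s(w, x)
    · subst h1; rcases Sym2.mem_iff.mp hv with rfl | rfl <;> assumption
    by_cases h2 : e = s(y, z)
    · subst h2; rcases Sym2.mem_iff.mp hv with rfl | rfl <;> assumption
    exact ⟨e, mem_rewire.mpr (.inr (.inr ⟨he, h1, h2⟩)), hv⟩

theorem energy_rewire (hΓ : IsMatching Γ) (hwx : s(w, x) ∈ Γ) (hyz : s(y, z) ∈ Γ)
    (hwy : w ≠ y) (hwz : w ≠ z) (hxy : x ≠ y) :
    energy (rewire Γ w x y z) + (edgeLength s(w, x) ^ 2 + edgeLength s(y, z) ^ 2) =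
      energy Γ + (edgeLength s(w, y) ^ 2 + edgeLength s(x, z) ^ 2) := by
  have hwy_notMem : s(w, y) ∉ Γ := fun h => hxy (hΓ.partner_unique hwx h)
  have hxz_notMem : s(x, z) ∉ Γ := fun h =>
    hwz (hΓ.partner_unique (Sym2.eq_swap ▸ hwx) h)
  have hwx' := hΓ.ne_of_mem hwx
  have hnew : s(w, y) ≠ s(x, z) := by simp; omega
  have hyz_erase : s(y, z) ∈ Γ.erase s(w, x) := by
    refine Finset.mem_erase.mpr ⟨?_, hyz⟩
    simp; omega
  unfold energy rewire
  rw [Finset.sum_insert (by simp [hnew, hwy_notMem]), Finset.sum_insert (by simp [hxz_notMem]),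
    ← Finset.add_sum_erase _ _ hwx, ← Finset.add_sum_erase _ _ hyz_erase]
  ring

end Rewire

theorem dist_sq_add_dist_sq_lt_of_nested {a b c d : ℕ} (hab : a < b) (hbc : b < c) (hcd : c < d) :
    Nat.dist a c ^ 2 + Nat.dist d b ^ 2 < Nat.dist a d ^ 2 + Nat.dist c b ^ 2 := by
  rw [Nat.dist_eq_sub_of_le (by omega : a ≤ c), Nat.dist_eq_sub_of_le_right (by omega : b ≤ d),
    Nat.dist_eq_sub_of_le (by omega : a ≤ d), Nat.dist_eq_sub_of_le_right (by omega : b ≤ c)]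
  zify [(by omega : a ≤ c), (by omega : b ≤ d), (by omega : a ≤ d), (by omega : b ≤ c)]
  nlinarith [mul_pos (by omega : (0 : ℤ) < b - a) (by omega : (0 : ℤ) < d - c)]

theorem dist_sq_add_dist_sq_lt_of_crossing {a b c d : ℕ} (hab : a < b) (hbc : b < c)
    (hcd : c < d) : Nat.dist a b ^ 2 + Nat.dist c d ^ 2 < Nat.dist a c ^ 2 + Nat.dist b d ^ 2 := by
  rw [Nat.dist_eq_sub_of_le (by omega : a ≤ b), Nat.dist_eq_sub_of_le (by omega : c ≤ d),
    Nat.dist_eq_sub_of_le (by omega : a ≤ c), Nat.dist_eq_sub_of_le (by omega : b ≤ d)]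
  zify [(by omega : a ≤ b), (by omega : c ≤ d), (by omega : a ≤ c), (by omega : b ≤ d)]
  nlinarith [mul_pos (by omega : (0 : ℤ) < c - b) (by omega : (0 : ℤ) < d - a)]

namespace TypeIIStep

variable {Γ Γ' : Finset (Sym2 ℕ)}

theorem exists_rewire (h : TypeIIStep Γ Γ') :
    ∃ w x y z, s(w, x) ∈ Γ ∧ s(y, z) ∈ Γ ∧ w ≠ y ∧ w ≠ z ∧ x ≠ y ∧ x ≠ z ∧
      edgeLength s(w, y) ^ 2 + edgeLength s(x, z) ^ 2 <
        edgeLength s(w, x) ^ 2 + edgeLength s(y, z) ^ 2 ∧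
      Γ' = rewire Γ w x y z := by
  rcases h with ⟨a, b, c, d, hab, hbc, hcd, had, hbc', -, rfl⟩ |
    ⟨a, b, c, d, hab, hbc, hcd, hac, hbd, -, rfl⟩
  · refine ⟨a, d, c, b, had, Sym2.eq_swap ▸ hbc', by omega, by omega, by omega, by omega,
      dist_sq_add_dist_sq_lt_of_nested hab hbc hcd, ?_⟩
    rw [rewire, Sym2.eq_swap (a := d), Sym2.eq_swap (a := c)]
  · exact ⟨a, c, b, d, hac, hbd, by omega, by omega, by omega, by omega,
      dist_sq_add_dist_sq_lt_of_crossing hab hbc hcd, rfl⟩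

theorem energy_lt (h : TypeIIStep Γ Γ') (hΓ : IsMatching Γ) : energy Γ' < energy Γ := by
  obtain ⟨w, x, y, z, hwx, hyz, hwy, hwz, hxy, -, hlt, rfl⟩ := h.exists_rewire
  have := energy_rewire hΓ hwx hyz hwy hwz hxy
  omega

theorem isPerfectOn {m : ℕ} (h : TypeIIStep Γ Γ') (hΓ : IsPerfectOn m Γ) : IsPerfectOn m Γ' := by
  obtain ⟨w, x, y, z, hwx, hyz, hwy, hwz, hxy, hxz, -, rfl⟩ := h.exists_rewire
  exact ⟨hΓ.1.rewire hwx hyz hwy hwz hxy hxz,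
    fun v => (inMatch_rewire_iff hwx hyz v).trans (hΓ.2 v)⟩

end TypeIIStep

theorem InMatch.exists_partner {Γ : Finset (Sym2 ℕ)} {v : ℕ} (h : InMatch Γ v) :
    ∃ w, s(v, w) ∈ Γ := by
  obtain ⟨e, he, hv⟩ := h
  obtain ⟨w, rfl⟩ := Sym2.mem_iff_exists.mp hv
  exact ⟨w, he⟩

namespace IsPerfectOn

variable {m : ℕ} {Γ : Finset (Sym2 ℕ)}

theorem consecutive_edge_mem_of_forall_short (h : IsPerfectOn m Γ)
    (hshort : ∀ x y, s(x, y) ∈ Γ → x < y → y = x + 1) {i : ℕ} (hi : i < m) :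
    s(2 * i + 1, 2 * i + 2) ∈ Γ := by
  induction i using Nat.strong_induction_on with
  | _ i ih =>
    obtain ⟨w, hw⟩ := InMatch.exists_partner ((h.2 (2 * i + 1)).mpr ⟨by omega, by omega⟩)
    rcases lt_or_gt_of_ne (h.1.ne_of_mem hw) with hlt | hgt
    · rwa [hshort _ _ hw hlt] at hw
    · -- `w = 2 * i`, which is already matched to `2 * i - 1`
      have hw' : s(w, 2 * i + 1) ∈ Γ := Sym2.eq_swap ▸ hw
      have hwi := hshort _ _ hw' hgt
      have hw1 := ((h.2 w).mp ⟨_, hw', Sym2.mem_mk_left _ _⟩).1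
      obtain ⟨j, rfl⟩ : ∃ j, i = j + 1 := ⟨i - 1, by omega⟩
      have hj : s(2 * j + 2, 2 * j + 1) ∈ Γ := Sym2.eq_swap ▸ ih j (by omega) (by omega)
      have := h.1.partner_unique hw' (by convert hj using 2; omega)
      omega

theorem eq_consecutiveMatching_of_forall_short (h : IsPerfectOn m Γ)
    (hshort : ∀ x y, s(x, y) ∈ Γ → x < y → y = x + 1) : Γ = consecutiveMatching m := by
  have hsub : ∀ x y, x < y → s(x, y) ∈ Γ → s(x, y) ∈ consecutiveMatching m := by
    intro x y hxy hx
    obtain rfl := hshort x y hx hxy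
    have hx1 := (h.2 x).mp ⟨_, hx, Sym2.mem_mk_left _ _⟩
    have hx2 := (h.2 (x + 1)).mp ⟨_, hx, Sym2.mem_mk_right _ _⟩
    rcases Nat.even_or_odd' x with ⟨j, rfl | rfl⟩
    · -- `2 * j` is already matched to `2 * j - 1`
      obtain ⟨k, rfl⟩ : ∃ k, j = k + 1 := ⟨j - 1, by omega⟩
      have hk := consecutive_edge_mem_of_forall_short h hshort (i := k) (by omega)
      have := h.1.partner_unique hx (by convert Sym2.eq_swap ▸ hk using 2; omega)
      omega
    · exact Finset.mem_image.mpr ⟨j, Finset.mem_range.mpr (by omega), rfl⟩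
  ext e
  induction e using Sym2.ind with
  | _ x y =>
    constructor
    · intro he
      rcases lt_or_gt_of_ne (h.1.ne_of_mem he) with hlt | hgt
      · exact hsub x y hlt he
      · rw [Sym2.eq_swap] at he ⊢
        exact hsub y x hgt he
    · intro he
      obtain ⟨i, hi, hie⟩ := Finset.mem_image.mp he
      exact hie ▸ consecutive_edge_mem_of_forall_short h hshort (Finset.mem_range.mp hi)

end IsPerfectOn

section BelowLongEdge

variable {Γ : Finset (Sym2 ℕ)} {a C : ℕ}

theorem IsMatching.lt_partner_or_exists_inner (hΓ : IsMatching Γ) (haC : s(a, C) ∈ Γ)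
    (hshort : ∀ x y, s(x, y) ∈ Γ → x < y → y < C → y = x + 1)
    {v w : ℕ} (hav : a < v) (hvC : v < C) (hvw : s(v, w) ∈ Γ) :
    C < w ∨ ∃ x ≤ v, ∃ y, a < x ∧ x < y ∧ y < C ∧ s(x, y) ∈ Γ := by
  have hwv : s(w, v) ∈ Γ := Sym2.eq_swap ▸ hvw
  have hwa : w ≠ a := by
    rintro rfl
    have := hΓ.partner_unique haC hwv
    omega
  have hwC : w ≠ C := by
    rintro rfl
    have := hΓ.partner_unique (Sym2.eq_swap ▸ haC) hwv
    omega
  rcases lt_or_gt_of_ne (hΓ.ne_of_mem hvw) with hvw' | hwv'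
  · rcases lt_or_gt_of_ne hwC with hwC' | hCw
    · exact .inr ⟨v, le_rfl, w, hav, hvw', hwC', hvw⟩
    · exact .inl hCw
  · have := hshort w v hwv hwv' hvC
    exact .inr ⟨w, hwv'.le, v, by omega, hwv', hvC, hwv⟩

theorem exists_typeIIa_of_exists_inner (hΓ : IsMatching Γ) (haC : s(a, C) ∈ Γ)
    (hshort : ∀ x y, s(x, y) ∈ Γ → x < y → y < C → y = x + 1)
    (hinner : ∃ u, ∃ v, a < u ∧ u < v ∧ v < C ∧ s(u, v) ∈ Γ) : ∃ Γ', TypeIIa Γ Γ' := by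
  classical
  obtain ⟨v, hau, huv, hvC, huv'⟩ := Nat.find_spec hinner
  obtain rfl := hshort _ v huv' huv hvC
  refine ⟨_, a, Nat.find hinner, _, C, hau, huv, hvC, haC, huv', ?_, rfl⟩
  intro v' w hav' hv'u hv'w
  rcases hΓ.lt_partner_or_exists_inner haC hshort hav' (by omega) hv'w with hCw | ⟨x, hxv', hx⟩
  · omega
  · exact absurd (Nat.find_min' hinner hx) (by omega)

theorem exists_typeIIb_of_not_exists_inner (hΓ : IsMatching Γ) (haC : s(a, C) ∈ Γ)
    (hshort : ∀ x y, s(x, y) ∈ Γ → x < y → y < C → y = x + 1) (hlong : a + 2 ≤ C)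
    (hinner : ¬ ∃ u, ∃ v, a < u ∧ u < v ∧ v < C ∧ s(u, v) ∈ Γ) (ha : InMatch Γ (a + 1)) :
    ∃ Γ', TypeIIb Γ Γ' := by
  have hout : ∀ v w, a < v → v < C → s(v, w) ∈ Γ → C < w := fun v w hav hvC hvw =>
    (hΓ.lt_partner_or_exists_inner haC hshort hav hvC hvw).resolve_right
      fun ⟨x, _, hx⟩ => hinner ⟨x, hx⟩
  obtain ⟨d, hd⟩ := ha.exists_partner
  exact ⟨_, a, a + 1, C, d, by omega, by omega, hout _ _ (by omega) (by omega) hd, haC, hd,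
    fun v w hav hvC => hout v w (by omega) hvC, rfl⟩

end BelowLongEdge

theorem IsPerfectOn.exists_typeIIStep {m : ℕ} {Γ : Finset (Sym2 ℕ)} (h : IsPerfectOn m Γ)
    (hne : Γ ≠ consecutiveMatching m) : ∃ Γ', TypeIIStep Γ Γ' := by
  classical
  have hlong : ∃ C a, a + 2 ≤ C ∧ s(a, C) ∈ Γ := by
    by_contra! hno
    refine hne (h.eq_consecutiveMatching_of_forall_short fun x y hxy hlt => ?_)
    by_contra hne'
    exact hno y x (by omega) hxy
  obtain ⟨a, hlongC, haC⟩ := Nat.find_spec hlong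
  have hshort : ∀ x y, s(x, y) ∈ Γ → x < y → y < Nat.find hlong → y = x + 1 := by
    intro x y hxy hlt hy
    by_contra hne'
    exact Nat.find_min hlong hy ⟨x, by omega, hxy⟩
  by_cases hinner : ∃ u, ∃ v, a < u ∧ u < v ∧ v < Nat.find hlong ∧ s(u, v) ∈ Γ
  · exact (exists_typeIIa_of_exists_inner h.1 haC hshort hinner).imp fun _ => .inl
  · have hC := ((h.2 _).mp ⟨_, haC, Sym2.mem_mk_right _ _⟩).2
    have ha : InMatch Γ (a + 1) := (h.2 _).mpr ⟨by omega, by omega⟩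
    exact (exists_typeIIb_of_not_exists_inner h.1 haC hshort hlongC hinner ha).imp fun _ => .inr

/-- Every perfect matching of `{1,…,2m}` can be transformed
by a finite sequence of Type II moves into the matching
`{{1,2}, {3,4}, …, {2m−1,2m}}` of `m` consecutive edges. -/
theorem perfect_matching_to_consecutive (m : ℕ) (Γ : Finset (Sym2 ℕ))
    (h : IsPerfectOn m Γ) :
    Relation.ReflTransGen TypeIIStep Γ
      ((Finset.range m).image fun i => s(2 * i + 1, 2 * i + 2)) := by
  induction hE : energy Γ using Nat.strong_induction_on generalizing Γ with
  | _ n ih =>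
    by_cases hΓ : Γ = consecutiveMatching m
    · rw [hΓ]
      exact .refl
    obtain ⟨Γ', hstep⟩ := h.exists_typeIIStep hΓ
    exact .head hstep (ih _ (hE ▸ hstep.energy_lt h.1) Γ' (hstep.isPerfectOn h) rfl)
end
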